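/- arXiv:1408.3386 — 3 statements merged into one kernel-verified Lean document; each statement's English description precedes it below -/
import Mathlib

section
/- Coherence bound for the exponential-polynomial dictionary (Lemma 8.1). For b > 0 and a nonnegative integer l, let φ_{l,b}(z) := e^{−bz} z^l (2b)^{l+1/2} / √((2l)!) for z > 0, and let ϱ(l₁, l₂; b₁, b₂) := ∫₀^∞ φ_{l₁,b₁}(z) φ_{l₂,b₂}(z) dz. Then for any parameters with l₁ ≤ l₂ and b₁ ≥ b₂, one has 0 < ϱ(l₁, l₂; b₁, b₂) ≤ exp{ − ((2 l₂ + 1)/2) · ( |log(b₁/b₂)| − log 4 ) }. -/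
open MeasureTheory Real

/-- The exponential-polynomial dictionary function
`φ_{l,b}(z) = e^{−bz} z^l (2b)^{l+1/2}/√((2l)!)`, of unit `L²(0,∞)` norm. -/
noncomputable def phiLag (l : ℕ) (b : ℝ) (z : ℝ) : ℝ :=
  Real.exp (-b * z) * z ^ l * (2 * b) ^ ((l : ℝ) + 1 / 2)
    / Real.sqrt ((2 * l).factorial)


lemma fact_sq_le (m n : ℕ) (h : m ≤ n) :
    (m + n).factorial * (m + n).factorial ≤ (2 * m).factorial * (2 * n).factorial := by
  induction n, h using Nat.le_induction with
  | base => rw [show m + m = 2 * m by ring]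
  | succ n hmn ih =>
    have h1 : (m + n + 1) * (m + n + 1) ≤ (2 * n + 1) * (2 * n + 2) := by nlinarith
    rw [show m + (n + 1) = (m + n) + 1 by ring, show 2 * (n + 1) = (2 * n + 1) + 1 by ring,
      Nat.factorial_succ, Nat.factorial_succ, Nat.factorial_succ]
    calc ((m+n+1) * (m+n).factorial) * ((m+n+1) * (m+n).factorial)
        = ((m+n).factorial * (m+n).factorial) * ((m+n+1)*(m+n+1)) := by ring
      _ ≤ ((2*m).factorial * (2*n).factorial) * ((2*n+1)*(2*n+2)) := Nat.mul_le_mul ih h1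
      _ = (2*m).factorial * ((2*n+1+1) * ((2*n+1) * (2*n).factorial)) := by ring

lemma integral_exp_pow (n : ℕ) {r : ℝ} (hr : 0 < r) :
    ∫ z in Set.Ioi (0:ℝ), Real.exp (-(r * z)) * z ^ n = n.factorial / r ^ (n + 1) := by
  have h := Real.integral_rpow_mul_exp_neg_mul_Ioi (a := (n:ℝ) + 1) (by positivity) hr
  rw [setIntegral_congr_fun measurableSet_Ioi
      (fun t ht => by rw [add_sub_cancel_right, Real.rpow_natCast])] at h
  simp_rw [mul_comm (Real.exp _)]
  rw [h, Real.Gamma_nat_eq_factorial,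
    show ((n:ℝ) + 1) = ((n+1 : ℕ) : ℝ) by push_cast; ring, Real.rpow_natCast,
    div_pow, one_pow]
  ring

/-- **Coherence bound for the exponential-polynomial dictionary** (Lemma 8.1 of
Pensky, "Solution of linear ill-posed problems using overcomplete
dictionaries").  For `l₁ ≤ l₂` and `b₁ ≥ b₂ > 0`,
`0 < ϱ(l₁,l₂;b₁,b₂) ≤ exp{−((2l₂+1)/2)(|log(b₁/b₂)| − log 4)}`. -/
theorem coherence_bound_exponential_dictionary
    (l₁ l₂ : ℕ) (b₁ b₂ : ℝ) (hl : l₁ ≤ l₂) (hb₂ : 0 < b₂) (hb : b₂ ≤ b₁) :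
    0 < (∫ z in Set.Ioi (0 : ℝ), phiLag l₁ b₁ z * phiLag l₂ b₂ z) ∧
    (∫ z in Set.Ioi (0 : ℝ), phiLag l₁ b₁ z * phiLag l₂ b₂ z)
      ≤ Real.exp (-((2 * (l₂ : ℝ) + 1) / 2)
          * (|Real.log (b₁ / b₂)| - Real.log 4)) := by
  have hb₁ : 0 < b₁ := lt_of_lt_of_le hb₂ hb
  have hbs : (0:ℝ) < b₁ + b₂ := by linarith
  have hF₁ : (0:ℝ) < Real.sqrt ((2 * l₁).factorial) :=
    Real.sqrt_pos.mpr (by exact_mod_cast (2 * l₁).factorial_pos)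
  have hF₂ : (0:ℝ) < Real.sqrt ((2 * l₂).factorial) :=
    Real.sqrt_pos.mpr (by exact_mod_cast (2 * l₂).factorial_pos)
  -- compute the integral
  have hfun : ∀ z : ℝ, phiLag l₁ b₁ z * phiLag l₂ b₂ z
      = ((2*b₁) ^ ((l₁:ℝ) + 1/2) * (2*b₂) ^ ((l₂:ℝ) + 1/2)
          / (Real.sqrt ((2*l₁).factorial) * Real.sqrt ((2*l₂).factorial)))
        * (Real.exp (-((b₁+b₂) * z)) * z ^ (l₁+l₂)) := by
    intro z
    have he : Real.exp (-((b₁+b₂) * z)) = Real.exp (-b₁*z) * Real.exp (-b₂*z) := by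
      rw [← Real.exp_add]; ring_nf
    simp only [phiLag]
    rw [he, pow_add]
    ring
  have hval : (∫ z in Set.Ioi (0 : ℝ), phiLag l₁ b₁ z * phiLag l₂ b₂ z)
      = ((2*b₁) ^ ((l₁:ℝ) + 1/2) * (2*b₂) ^ ((l₂:ℝ) + 1/2)
          / (Real.sqrt ((2*l₁).factorial) * Real.sqrt ((2*l₂).factorial)))
        * ((l₁+l₂).factorial / (b₁+b₂) ^ (l₁+l₂+1)) := by
    simp_rw [hfun]
    rw [integral_const_mul, integral_exp_pow (l₁+l₂) hbs]
  constructor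
  · rw [hval]; positivity
  -- upper bound
  rw [hval]
  have habs : |Real.log (b₁/b₂)| = Real.log (b₁/b₂) :=
    abs_of_nonneg (Real.log_nonneg (by rw [le_div_iff₀ hb₂]; linarith))
  have hRHS : Real.exp (-((2*(l₂:ℝ)+1)/2) * (|Real.log (b₁/b₂)| - Real.log 4))
      = (4:ℝ) ^ ((l₂:ℝ) + 1/2) * (b₂/b₁) ^ ((l₂:ℝ) + 1/2) := by
    rw [habs, Real.rpow_def_of_pos (by norm_num : (0:ℝ) < 4),
      Real.rpow_def_of_pos (by positivity : (0:ℝ) < b₂/b₁), ← Real.exp_add]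
    congr 1
    rw [Real.log_div (ne_of_gt hb₁) (ne_of_gt hb₂),
      Real.log_div (ne_of_gt hb₂) (ne_of_gt hb₁)]
    ring
  rw [hRHS]
  -- factorial part ≤ 1
  have hN : ((l₁+l₂).factorial : ℝ)
      ≤ Real.sqrt ((2*l₁).factorial) * Real.sqrt ((2*l₂).factorial) := by
    rw [← Real.sqrt_mul (by positivity),
      ← Real.sqrt_mul_self (by positivity : (0:ℝ) ≤ ((l₁+l₂).factorial : ℝ))]
    apply Real.sqrt_le_sqrt
    exact_mod_cast fact_sq_le l₁ l₂ hl
  -- power part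
  have hD : ((b₁+b₂) ^ (l₁+l₂+1) : ℝ) = (b₁+b₂) ^ (((l₁:ℝ)+1/2) + ((l₂:ℝ)+1/2)) := by
    rw [← Real.rpow_natCast (b₁+b₂) (l₁+l₂+1)]
    congr 1; push_cast; ring
  have hpow : (2*b₁) ^ ((l₁:ℝ)+1/2) * (2*b₂) ^ ((l₂:ℝ)+1/2)
      ≤ ((4:ℝ) ^ ((l₂:ℝ)+1/2) * (b₂/b₁) ^ ((l₂:ℝ)+1/2)) * ((b₁+b₂) ^ (l₁+l₂+1) : ℝ) := by
    rw [hD, Real.rpow_add hbs]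
    have hA : (2*b₁) ^ ((l₁:ℝ)+1/2) ≤ (2*(b₁+b₂)) ^ ((l₁:ℝ)+1/2) :=
      Real.rpow_le_rpow (by positivity) (by linarith) (by positivity)
    have hB : (2*b₂) ^ ((l₂:ℝ)+1/2) ≤ (2*(b₂/b₁)*(b₁+b₂)) ^ ((l₂:ℝ)+1/2) := by
      apply Real.rpow_le_rpow (by positivity) ?_ (by positivity)
      have h1 : (1:ℝ) ≤ (b₁+b₂)/b₁ := (one_le_div hb₁).mpr (by linarith)
      have := mul_le_mul_of_nonneg_left h1 (by positivity : (0:ℝ) ≤ 2*b₂)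
      calc 2*b₂ = 2*b₂*1 := by ring
        _ ≤ 2*b₂*((b₁+b₂)/b₁) := this
        _ = 2*(b₂/b₁)*(b₁+b₂) := by field_simp
    have h2 : (2:ℝ) ^ ((l₁:ℝ)+1/2) ≤ (2:ℝ) ^ ((l₂:ℝ)+1/2) := by
      apply Real.rpow_le_rpow_of_exponent_le (by norm_num)
      have : (l₁:ℝ) ≤ (l₂:ℝ) := by exact_mod_cast hl
      linarith
    calc (2*b₁) ^ ((l₁:ℝ)+1/2) * (2*b₂) ^ ((l₂:ℝ)+1/2)
        ≤ (2*(b₁+b₂)) ^ ((l₁:ℝ)+1/2) * (2*(b₂/b₁)*(b₁+b₂)) ^ ((l₂:ℝ)+1/2) :=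
          mul_le_mul hA hB (by positivity) (by positivity)
      _ = (2:ℝ)^((l₁:ℝ)+1/2) * ((2:ℝ)^((l₂:ℝ)+1/2) * (b₂/b₁)^((l₂:ℝ)+1/2)
            * ((b₁+b₂)^((l₁:ℝ)+1/2) * (b₁+b₂)^((l₂:ℝ)+1/2))) := by
          rw [Real.mul_rpow (by norm_num) hbs.le,
            Real.mul_rpow (by positivity) hbs.le,
            Real.mul_rpow (by norm_num) (by positivity)]
          ring
      _ ≤ (2:ℝ)^((l₂:ℝ)+1/2) * ((2:ℝ)^((l₂:ℝ)+1/2) * (b₂/b₁)^((l₂:ℝ)+1/2)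
            * ((b₁+b₂)^((l₁:ℝ)+1/2) * (b₁+b₂)^((l₂:ℝ)+1/2))) := by
          apply mul_le_mul_of_nonneg_right h2 (by positivity)
      _ = (4:ℝ)^((l₂:ℝ)+1/2) * (b₂/b₁)^((l₂:ℝ)+1/2)
            * ((b₁+b₂)^((l₁:ℝ)+1/2) * (b₁+b₂)^((l₂:ℝ)+1/2)) := by
          rw [show (4:ℝ) = 2*2 by norm_num, Real.mul_rpow (by norm_num) (by norm_num)]
          ring
  -- combine
  have hDpos : (0:ℝ) < (b₁+b₂) ^ (l₁+l₂+1) := by positivity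
  calc ((2*b₁) ^ ((l₁:ℝ) + 1/2) * (2*b₂) ^ ((l₂:ℝ) + 1/2)
          / (Real.sqrt ((2*l₁).factorial) * Real.sqrt ((2*l₂).factorial)))
        * ((l₁+l₂).factorial / (b₁+b₂) ^ (l₁+l₂+1))
      = (((l₁+l₂).factorial : ℝ) / (Real.sqrt ((2*l₁).factorial) * Real.sqrt ((2*l₂).factorial)))
        * ((2*b₁) ^ ((l₁:ℝ) + 1/2) * (2*b₂) ^ ((l₂:ℝ) + 1/2) / (b₁+b₂) ^ (l₁+l₂+1)) := by
        ring
    _ ≤ 1 * ((2*b₁) ^ ((l₁:ℝ) + 1/2) * (2*b₂) ^ ((l₂:ℝ) + 1/2) / (b₁+b₂) ^ (l₁+l₂+1)) := by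
        apply mul_le_mul_of_nonneg_right ((div_le_one (by positivity)).mpr hN) (by positivity)
    _ = (2*b₁) ^ ((l₁:ℝ) + 1/2) * (2*b₂) ^ ((l₂:ℝ) + 1/2) / (b₁+b₂) ^ (l₁+l₂+1) := by ring
    _ ≤ (4:ℝ) ^ ((l₂:ℝ) + 1/2) * (b₂/b₁) ^ ((l₂:ℝ) + 1/2) := by
        rw [div_le_iff₀ hDpos]; exact hpow
end

section
/- Factorial ratio bound from the proof of Lemma 8.1 (inequality (10.9)). For all nonnegative integers l₁, l₂ with (l₁, l₂) ≠ (0,0), one has ((l₁ + l₂)!)² / ((2l₁)! (2l₂)!) ≤ exp( − (l₁ − l₂)² / (2 max(l₁, l₂)) ). -/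
/-!
Writing `l₁ = l₂ + d`, the ratio telescopes into `∏_{i<d} (2l₂+1+i)/(2l₂+d+1+i)`. Each factor is
`1 - d/(2l₂+d+1+i) ≤ exp(-d/(2l₂+d+1+i)) ≤ exp(-d/(2l₁))`, and there are `d` of them.
-/

open Finset Nat Real

lemma cast_factorial_add_eq_mul_prod (n d : ℕ) :
    ((n + d)! : ℝ) = n ! * ∏ i ∈ range d, ((n + 1 + i : ℕ) : ℝ) := by
  rw [← factorial_mul_ascFactorial, ascFactorial_eq_prod_range]
  push_cast
  rfl

lemma sq_factorial_div_eq_prod (n d : ℕ) :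
    ((n + d)! : ℝ) ^ 2 / (n ! * (n + 2 * d)!)
      = ∏ i ∈ range d, ((n + 1 + i : ℕ) : ℝ) / (n + d + 1 + i : ℕ) := by
  have hlow := cast_factorial_add_eq_mul_prod n d
  have hhigh := cast_factorial_add_eq_mul_prod (n + d) d
  rw [add_assoc, ← two_mul] at hhigh
  rw [prod_div_distrib, hhigh, hlow]
  field_simp

lemma div_le_exp_neg_of_lt (n d i : ℕ) (hi : i < d) :
    ((n + 1 + i : ℕ) : ℝ) / (n + d + 1 + i : ℕ) ≤ exp (-(d / (n + 2 * d))) := by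
  have hle : ((n + d + 1 + i : ℕ) : ℝ) ≤ n + 2 * d := by
    exact_mod_cast (by omega : n + d + 1 + i ≤ n + 2 * d)
  calc ((n + 1 + i : ℕ) : ℝ) / (n + d + 1 + i : ℕ) = 1 - d / (n + d + 1 + i : ℕ) := by
        field_simp; push_cast; ring
    _ ≤ exp (-(d / (n + d + 1 + i : ℕ))) := one_sub_le_exp_neg _
    _ ≤ exp (-(d / (n + 2 * d))) := by gcongr

lemma sq_factorial_div_le_exp (n d : ℕ) :
    ((n + d)! : ℝ) ^ 2 / (n ! * (n + 2 * d)!) ≤ exp (-((d : ℝ) ^ 2 / (n + 2 * d))) := by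
  rw [sq_factorial_div_eq_prod]
  calc ∏ i ∈ range d, ((n + 1 + i : ℕ) : ℝ) / (n + d + 1 + i : ℕ)
      ≤ ∏ _i ∈ range d, exp (-(d / (n + 2 * d))) :=
        prod_le_prod (fun _ _ ↦ by positivity) fun i hi ↦ div_le_exp_neg_of_lt n d i (mem_range.1 hi)
    _ = exp (-((d : ℝ) ^ 2 / (n + 2 * d))) := by
        rw [prod_const, card_range, ← exp_nat_mul]
        congr 1
        ring

lemma factorial_ratio_bound_of_le {l₁ l₂ : ℕ} (hle : l₂ ≤ l₁) :
    ((l₁ + l₂)! : ℝ) ^ 2 / ((2 * l₁)! * (2 * l₂)!)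
      ≤ exp (-((l₁ : ℝ) - l₂) ^ 2 / (2 * l₁)) := by
  obtain ⟨d, rfl⟩ := Nat.exists_eq_add_of_le hle
  rw [show l₂ + d + l₂ = 2 * l₂ + d by omega, show 2 * (l₂ + d) = 2 * l₂ + 2 * d by omega,
    mul_comm ((2 * l₂ + 2 * d)! : ℝ)]
  convert sq_factorial_div_le_exp (2 * l₂) d using 2
  push_cast
  ring

theorem factorial_ratio_bound_general
    (l₁ l₂ : ℕ) :
    (((l₁ + l₂).factorial : ℝ)) ^ 2 / (((2 * l₁).factorial : ℝ) * ((2 * l₂).factorial : ℝ))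
      ≤ Real.exp (-((l₁ : ℝ) - (l₂ : ℝ)) ^ 2 / (2 * (max l₁ l₂ : ℕ))) := by
  rcases le_total l₂ l₁ with hle | hle
  · rw [max_eq_left hle]
    exact factorial_ratio_bound_of_le hle
  · rw [max_eq_right hle, add_comm, mul_comm, sub_sq_comm]
    exact factorial_ratio_bound_of_le hle

/-- **Factorial ratio bound** (inequality (10.9) in the proof of Lemma 8.1 of
Pensky, "Solution of linear ill-posed problems using overcomplete
dictionaries").  For nonnegative integers `l₁, l₂` not both zero,
`((l₁+l₂)!)²/((2l₁)!(2l₂)!) ≤ exp(−(l₁−l₂)²/(2 max(l₁,l₂)))`. -/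
theorem factorial_ratio_bound
    (l₁ l₂ : ℕ) (h : (l₁, l₂) ≠ (0, 0)) :
    (((l₁ + l₂).factorial : ℝ)) ^ 2 / (((2 * l₁).factorial : ℝ) * ((2 * l₂).factorial : ℝ))
      ≤ Real.exp (-((l₁ : ℝ) - (l₂ : ℝ)) ^ 2 / (2 * (max l₁ l₂ : ℕ))) :=
  factorial_ratio_bound_general l₁ l₂
end

section
/- Determinant optimization identity over the positive-definite cone from the proof of Corollary 8.1. Let A be an r×r real symmetric positive definite matrix and let α, β be real numbers with β > α > 0. Then the supremum, over all r×r real symmetric matrices Y such that Y − A is positive definite, of det(Y − A)^α · det(Y)^{−β} equals det(A)^{α−β} · ( α^α (β − α)^{β−α} / β^β )^r, and it is attained at Y = (β/(β − α)) A. -/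
open Matrix Real

/-!
Congruence by `A^{-1/2}` turns `Y - A` into a positive definite `M` with eigenvalues `λᵢ > 0`
and `Y` into `1 + M`, so that `det(Y - A)^α det(Y)^{-β} = det(A)^{α-β} ∏ λᵢ^α (1 + λᵢ)^{-β}`.
By weighted AM-GM each factor `t^α (1 + t)^{-β}` is at most `α^α (β-α)^{β-α} / β^β`,
with equality at `t = α / (β - α)`, i.e. at `Y = (β / (β - α)) A`.
-/

lemma rpow_mul_one_add_rpow_neg_le {α β t : ℝ} (hα : 0 < α) (hβ : α < β) (ht : 0 ≤ t) :
    t ^ α * (1 + t) ^ (-β) ≤ α ^ α * (β - α) ^ (β - α) / β ^ β := by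
  have hc : 0 < β - α := sub_pos.mpr hβ
  have hb : 0 < β := hα.trans hβ
  have amgm := geom_mean_le_arith_mean2_weighted (w₁ := α / β) (w₂ := (β - α) / β)
    (p₁ := β * t / α) (p₂ := β / (β - α)) (by positivity) (by positivity) (by positivity)
    (by positivity) (by field_simp; ring)
  have hsum : α / β * (β * t / α) + (β - α) / β * (β / (β - α)) = 1 + t := by
    field_simp; ring
  have key : (β * t / α) ^ α * (β / (β - α)) ^ (β - α) ≤ (1 + t) ^ β := by
    have h := rpow_le_rpow (by positivity) amgm hb.le
    rwa [mul_rpow (by positivity) (by positivity), ← rpow_mul (by positivity),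
      ← rpow_mul (by positivity), div_mul_cancel₀ _ hb.ne', div_mul_cancel₀ _ hb.ne', hsum] at h
  have hexpand : (β * t / α) ^ α * (β / (β - α)) ^ (β - α)
      = t ^ α * β ^ β / (α ^ α * (β - α) ^ (β - α)) := by
    rw [div_rpow (by positivity) hα.le, mul_rpow hb.le ht, div_rpow hb.le hc.le,
      rpow_sub hb β α]
    field_simp
  rw [hexpand, div_le_iff₀ (by positivity)] at key
  rw [rpow_neg (by positivity), ← div_eq_mul_inv, div_le_div_iff₀ (by positivity) (by positivity)]
  linarith

lemma div_sub_rpow_mul_div_sub_rpow_neg {α β : ℝ} (hα : 0 < α) (hβ : α < β) :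
    (α / (β - α)) ^ α * (β / (β - α)) ^ (-β) = α ^ α * (β - α) ^ (β - α) / β ^ β := by
  have hc : 0 < β - α := sub_pos.mpr hβ
  have hb : 0 < β := hα.trans hβ
  rw [div_rpow hα.le hc.le, rpow_neg (div_pos hb hc).le, div_rpow hb.le hc.le, rpow_sub hc]
  field_simp

section Determinants

variable {n : Type*} [Fintype n] [DecidableEq n]

lemma Matrix.IsHermitian.det_cfc {M : Matrix n n ℝ} (hM : M.IsHermitian) (f : ℝ → ℝ) :
    (cfc f M).det = ∏ i, f (hM.eigenvalues i) := by
  simp [hM.cfc_eq, IsHermitian.cfc, -Unitary.conjStarAlgAut_apply]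

lemma Matrix.IsHermitian.det_one_add {M : Matrix n n ℝ} (hM : M.IsHermitian) :
    (1 + M).det = ∏ i, (1 + hM.eigenvalues i) := by
  rw [← hM.det_cfc, cfc_add .., cfc_const_one .., cfc_id' ..]

open scoped MatrixOrder in
lemma Matrix.PosDef.exists_posDef_det_eq_and_det_add_eq {A B : Matrix n n ℝ} (hA : A.PosDef)
    (hB : B.PosDef) :
    ∃ M : Matrix n n ℝ, M.PosDef ∧ B.det = A.det * M.det ∧ (A + B).det = A.det * (1 + M).det := by
  set S := CFC.sqrt A
  have hS : S.PosDef := hA.isStrictlyPositive.sqrt.posDef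
  have hSS : S * S = A := CFC.sqrt_mul_sqrt_self A hA.posSemidef.nonneg
  have hST : S * S⁻¹ = 1 := mul_nonsing_inv S hS.det_pos.ne'.isUnit
  have hTS : S⁻¹ * S = 1 := nonsing_inv_mul S hS.det_pos.ne'.isUnit
  have det_sandwich (X : Matrix n n ℝ) : (S * X * S).det = A.det * X.det := by
    rw [← hSS, det_mul, det_mul, det_mul]; ring
  have hM : (S⁻¹ᴴ * B * S⁻¹).PosDef :=
    hB.conjTranspose_mul_mul_same (mulVec_injective_iff_isUnit.mpr hS.inv.isUnit)
  rw [hS.inv.isHermitian.eq] at hM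
  refine ⟨_, hM, ?_, ?_⟩
  · rw [← det_sandwich, ← mul_assoc, ← mul_assoc, hST, one_mul, mul_assoc, hTS, mul_one]
  · rw [← det_sandwich, mul_add, add_mul, mul_one, hSS, ← mul_assoc, ← mul_assoc, hST, one_mul,
      mul_assoc, hTS, mul_one]

lemma Matrix.PosDef.det_rpow_mul_det_add_rpow_neg_le {A B : Matrix n n ℝ} (hA : A.PosDef)
    (hB : B.PosDef) {α β : ℝ} (hα : 0 < α) (hβ : α < β) :
    B.det ^ α * (A + B).det ^ (-β)
      ≤ A.det ^ (α - β) * (α ^ α * (β - α) ^ (β - α) / β ^ β) ^ Fintype.card n := by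
  obtain ⟨M, hM, hBM, hABM⟩ := hA.exists_posDef_det_eq_and_det_add_eq hB
  set ev := hM.isHermitian.eigenvalues
  have hev (i : n) : 0 < ev i := hM.eigenvalues_pos i
  have hdetM : M.det = ∏ i, ev i := by simpa using hM.isHermitian.det_eq_prod_eigenvalues
  have hdetA := hA.det_pos
  have hdet1M : 0 < (1 + M).det := by
    rw [hM.isHermitian.det_one_add]
    exact Finset.prod_pos fun i _ => by linarith [hev i]
  calc B.det ^ α * (A + B).det ^ (-β)
      = A.det ^ (α - β) * (M.det ^ α * (1 + M).det ^ (-β)) := by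
        rw [hBM, hABM, mul_rpow hdetA.le hM.det_pos.le, mul_rpow hdetA.le hdet1M.le,
          sub_eq_add_neg, rpow_add hdetA]
        ring
    _ = A.det ^ (α - β) * ∏ i, (ev i ^ α * (1 + ev i) ^ (-β)) := by
        rw [hdetM, hM.isHermitian.det_one_add, Finset.prod_mul_distrib,
          finsetProd_rpow _ _ fun i _ => (hev i).le,
          finsetProd_rpow _ _ fun i _ => by linarith [hev i]]
    _ ≤ A.det ^ (α - β) * ∏ _i : n, (α ^ α * (β - α) ^ (β - α) / β ^ β) := by
        refine mul_le_mul_of_nonneg_left (Finset.prod_le_prod (fun i _ => ?_)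
          fun i _ => rpow_mul_one_add_rpow_neg_le hα hβ (hev i).le) (rpow_nonneg hdetA.le _)
        have := hev i
        positivity
    _ = A.det ^ (α - β) * (α ^ α * (β - α) ^ (β - α) / β ^ β) ^ Fintype.card n := by
        rw [Finset.prod_const, Finset.card_univ]

lemma Matrix.det_smul_rpow_mul_det_smul_rpow_neg {A : Matrix n n ℝ} (hA : 0 < A.det)
    {c d : ℝ} (hc : 0 ≤ c) (hd : 0 ≤ d) (α β : ℝ) :
    (c • A).det ^ α * (d • A).det ^ (-β)
      = A.det ^ (α - β) * (c ^ α * d ^ (-β)) ^ Fintype.card n := by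
  rw [det_smul, det_smul, mul_rpow (by positivity) hA.le, mul_rpow (by positivity) hA.le,
    ← rpow_pow_comm hc, ← rpow_pow_comm hd, sub_eq_add_neg, rpow_add hA, mul_pow]
  ring

end Determinants

/-- **Determinant optimization identity over the positive-definite cone** (from
the proof of Corollary 8.1 of Pensky, "Solution of linear ill-posed problems
using overcomplete dictionaries").  For an `r×r` real symmetric positive
definite `A` and `β > α > 0`, the supremum over symmetric `Y` with `Y − A`
positive definite of `det(Y−A)^α det(Y)^{−β}` equals
`det(A)^{α−β} (α^α(β−α)^{β−α}/β^β)^r`, attained at `Y = (β/(β−α)) A`. -/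
theorem determinant_optimization_identity
    {r : ℕ} (A : Matrix (Fin r) (Fin r) ℝ) (hA : A.PosDef)
    (α β : ℝ) (hα : 0 < α) (hβ : α < β) :
    (((β / (β - α)) • A - A).det ^ α * ((β / (β - α)) • A).det ^ (-β)
        = A.det ^ (α - β) * (α ^ α * (β - α) ^ (β - α) / β ^ β) ^ r) ∧
    IsGreatest
      { x : ℝ | ∃ Y : Matrix (Fin r) (Fin r) ℝ,
          Y.IsSymm ∧ (Y - A).PosDef ∧ x = (Y - A).det ^ α * Y.det ^ (-β) }
      (A.det ^ (α - β) * (α ^ α * (β - α) ^ (β - α) / β ^ β) ^ r) := by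
  have hc : 0 < β - α := sub_pos.mpr hβ
  have hYA : (β / (β - α)) • A - A = (α / (β - α)) • A := by
    rw [show α / (β - α) = β / (β - α) - 1 by field_simp; ring, sub_smul, one_smul]
  have hmax : ((β / (β - α)) • A - A).det ^ α * ((β / (β - α)) • A).det ^ (-β)
      = A.det ^ (α - β) * (α ^ α * (β - α) ^ (β - α) / β ^ β) ^ r := by
    rw [hYA, det_smul_rpow_mul_det_smul_rpow_neg hA.det_pos (div_pos hα hc).le
      (div_pos (hα.trans hβ) hc).le,
      div_sub_rpow_mul_div_sub_rpow_neg hα hβ, Fintype.card_fin]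
  refine ⟨hmax, ⟨_, ?_, ?_, hmax.symm⟩, ?_⟩
  · exact (isHermitian_iff_isSymm.mp hA.isHermitian).smul _
  · rw [hYA]
    exact hA.smul (div_pos hα hc)
  · rintro x ⟨Y, -, hYA, rfl⟩
    simpa using hA.det_rpow_mul_det_add_rpow_neg_le hYA hα hβ
end
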